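/- For every n ≥ 1 and every k with 1 ≤ k ≤ n, the integral over [0, π] of S_{k,n}(t) equals π/n, where S_{k,n}(t) = ½(P_k(t − π/(2n)) + P_k(t + π/(2n))). -/
import Mathlib


open Real MeasureTheory Set Filter

/-- Chebyshev angles `θ_k = (2k-1)π/(2n)`. -/
noncomputable def cheb (n k : ℕ) : ℝ := (2 * (k : ℝ) - 1) * π / (2 * n)

/-- Fundamental Lagrange polynomials at Chebyshev nodes, in the angular
variable, extended continuously through the removable singularities. -/
noncomputable def P (n k : ℕ) (t : ℝ) : ℝ :=
  if Real.cos t = Real.cos (cheb n k) then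
    (-1) ^ (k + 1) * Real.sin (n * t) * Real.sin (cheb n k) / Real.sin t
  else
    (-1) ^ (k + 1) * Real.cos (n * t) * Real.sin (cheb n k) /
      (n * (Real.cos t - Real.cos (cheb n k)))

/-- `S_{k,n}(t) = (P_k(t - π/(2n)) + P_k(t + π/(2n)))/2`. -/
noncomputable def S (n k : ℕ) (t : ℝ) : ℝ :=
  (P n k (t - π / (2 * n)) + P n k (t + π / (2 * n))) / 2

/-- The Grünwald–Durrmeyer operator. -/
noncomputable def D (n : ℕ) (f : ℝ → ℝ) (θ : ℝ) : ℝ :=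
  (n / π) * ∑ k ∈ Finset.Icc 1 n, S n k θ * ∫ t in (0:ℝ)..π, f t * S n k t

-- recurrence
lemma cos_rec (x : ℝ) (m : ℕ) :
    Real.cos (((m:ℝ)+2)*x) = 2 * Real.cos x * Real.cos (((m:ℝ)+1)*x) - Real.cos ((m:ℝ)*x) := by
  have h1 := Real.cos_add (((m:ℝ)+1)*x) x
  have h2 := Real.cos_sub (((m:ℝ)+1)*x) x
  have e1 : ((m:ℝ)+2)*x = ((m:ℝ)+1)*x + x := by ring
  have e2 : (m:ℝ)*x = ((m:ℝ)+1)*x - x := by ring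
  rw [e1, e2, h1, h2]; ring

lemma key_id (θ t : ℝ) (m : ℕ) :
    (Real.cos t - Real.cos θ) *
      (1 + 2 * ∑ j ∈ Finset.range m, Real.cos (((j:ℝ)+1)*θ) * Real.cos (((j:ℝ)+1)*t)) =
    Real.cos ((m:ℝ)*θ) * Real.cos (((m:ℝ)+1)*t) - Real.cos (((m:ℝ)+1)*θ) * Real.cos ((m:ℝ)*t) := by
  induction m with
  | zero => simp
  | succ m ih =>
    rw [Finset.sum_range_succ]
    push_cast
    have hθ := cos_rec θ m
    have ht := cos_rec t m
    rw [show ((m:ℝ)+1+1)*t = ((m:ℝ)+2)*t by ring, show ((m:ℝ)+1+1)*θ = ((m:ℝ)+2)*θ by ring]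
    linear_combination ih - Real.cos (((m:ℝ)+1)*θ) * ht + Real.cos (((m:ℝ)+1)*t) * hθ

lemma n_cheb (n k : ℕ) (hn : 1 ≤ n) : (n:ℝ) * cheb n k = (k:ℝ) * π - π/2 := by
  have hn' : (n:ℝ) ≠ 0 := Nat.cast_ne_zero.2 (by omega)
  unfold cheb
  field_simp

lemma cos_n_cheb (n k : ℕ) (hn : 1 ≤ n) : Real.cos ((n:ℝ) * cheb n k) = 0 := by
  rw [n_cheb n k hn, Real.cos_sub, Real.cos_pi_div_two, Real.sin_pi_div_two]
  simp [Real.sin_nat_mul_pi]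

lemma sin_n_cheb (n k : ℕ) (hn : 1 ≤ n) : Real.sin ((n:ℝ) * cheb n k) = (-1)^(k+1) := by
  rw [n_cheb n k hn, Real.sin_sub, Real.cos_pi_div_two, Real.sin_pi_div_two]
  have : Real.cos ((k:ℝ) * π) = (-1)^k := by
    have h := Real.cos_nat_mul_pi_sub 0 k
    simpa using h
  rw [this, Real.sin_nat_mul_pi]
  ring

lemma cos_nm1_cheb (n k : ℕ) (hn : 1 ≤ n) :
    Real.cos (((n:ℝ) - 1) * cheb n k) = (-1)^(k+1) * Real.sin (cheb n k) := by
  have : ((n:ℝ) - 1) * cheb n k = (n:ℝ) * cheb n k - cheb n k := by ring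
  rw [this, Real.cos_sub, cos_n_cheb n k hn, sin_n_cheb n k hn]
  ring

/-- The cosine polynomial expansion of the Lagrange basis. -/
noncomputable def Q (n k : ℕ) (t : ℝ) : ℝ :=
  (1 + 2 * ∑ j ∈ Finset.range (n-1), Real.cos (((j:ℝ)+1) * cheb n k) * Real.cos (((j:ℝ)+1) * t)) / n

lemma P_eq_Q (n k : ℕ) (hn : 1 ≤ n) (t : ℝ) (h : Real.cos t ≠ Real.cos (cheb n k)) :
    P n k t = Q n k t := by
  have hn' : (n:ℝ) ≠ 0 := Nat.cast_ne_zero.2 (by omega)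
  have hkey := key_id (cheb n k) t (n-1)
  have hcast : ((n-1 : ℕ) : ℝ) = (n:ℝ) - 1 := by
    have := Nat.cast_sub hn (R := ℝ); simpa using this
  rw [hcast, show ((n:ℝ) - 1) + 1 = (n:ℝ) by ring, cos_nm1_cheb n k hn,
     cos_n_cheb n k hn, zero_mul, sub_zero] at hkey
  have hne : Real.cos t - Real.cos (cheb n k) ≠ 0 := sub_ne_zero.2 h
  have hne2 : (n:ℝ) * (Real.cos t - Real.cos (cheb n k)) ≠ 0 := mul_ne_zero hn' hne
  rw [P, if_neg h, Q, div_eq_div_iff hne2 hn']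
  linear_combination (-(n:ℝ)) * hkey

lemma countable_bad (c : ℝ) : Set.Countable {t : ℝ | Real.cos t = Real.cos c} := by
  have hsub : {t : ℝ | Real.cos t = Real.cos c} ⊆
      (Set.range fun m : ℤ => 2 * (m:ℝ) * π - c) ∪ (Set.range fun m : ℤ => 2 * (m:ℝ) * π + c) := by
    intro t ht
    have h0 : Real.cos t - Real.cos c = 0 := sub_eq_zero.2 ht
    rw [Real.cos_sub_cos] at h0
    rcases mul_eq_zero.1 h0 with h | h
    · rcases mul_eq_zero.1 h with h | h
      · norm_num at h
      · obtain ⟨m, hm⟩ := Real.sin_eq_zero_iff.1 h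
        exact Or.inl ⟨m, by linear_combination 2*hm⟩
    · obtain ⟨m, hm⟩ := Real.sin_eq_zero_iff.1 h
      exact Or.inr ⟨m, by linear_combination 2*hm⟩
  exact Set.Countable.mono hsub ((Set.countable_range _).union (Set.countable_range _))

lemma ae_ne (c b : ℝ) : ∀ᵐ t : ℝ, Real.cos (t + b) ≠ Real.cos c := by
  have hc : Set.Countable {t : ℝ | Real.cos (t + b) = Real.cos c} := by
    have : {t : ℝ | Real.cos (t + b) = Real.cos c} =
        (fun z => z - b) '' {t : ℝ | Real.cos t = Real.cos c} := by
      ext t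
      simp only [Set.mem_setOf_eq, Set.mem_image]
      constructor
      · intro h; exact ⟨t + b, h, by ring⟩
      · rintro ⟨z, hz, rfl⟩; simpa using hz
    rw [this]
    exact (countable_bad c).image _
  have hm : volume {t : ℝ | Real.cos (t + b) = Real.cos c} = 0 := hc.measure_zero _
  rw [MeasureTheory.ae_iff]
  simpa using hm

lemma int_cos (u : ℕ) : ∫ t in (0:ℝ)..π, Real.cos (((u:ℝ)+1) * t) = 0 := by
  have hu : ((u:ℝ)+1) ≠ 0 := by positivity
  rw [intervalIntegral.integral_comp_mul_left Real.cos hu]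
  have : ((u:ℝ)+1) * π = ((u+1 : ℕ) : ℝ) * π := by push_cast; ring
  simp [integral_cos, this, Real.sin_nat_mul_pi]

lemma integral_Q_pair (n k : ℕ) (hn : 1 ≤ n) (a : ℝ) :
    ∫ t in (0:ℝ)..π, (Q n k (t - a) + Q n k (t + a)) / 2 = π / n := by
  have hn' : (n:ℝ) ≠ 0 := Nat.cast_ne_zero.2 (by omega)
  have heq : ∀ t : ℝ, (Q n k (t - a) + Q n k (t + a)) / 2 =
      1/(n:ℝ) + (1/(n:ℝ)) * ∑ j ∈ Finset.range (n-1),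
        (2 * Real.cos (((j:ℝ)+1) * cheb n k) * Real.cos (((j:ℝ)+1) * a)) *
          Real.cos (((j:ℝ)+1) * t) := by
    intro t
    have hsum : (∑ j ∈ Finset.range (n-1), Real.cos (((j:ℝ)+1) * cheb n k) * Real.cos (((j:ℝ)+1) * (t-a)))
        + (∑ j ∈ Finset.range (n-1), Real.cos (((j:ℝ)+1) * cheb n k) * Real.cos (((j:ℝ)+1) * (t+a)))
        = ∑ j ∈ Finset.range (n-1),
            (2 * Real.cos (((j:ℝ)+1) * cheb n k) * Real.cos (((j:ℝ)+1) * a)) * Real.cos (((j:ℝ)+1) * t) := by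
      rw [← Finset.sum_add_distrib]
      refine Finset.sum_congr rfl fun j _ => ?_
      have h2 : Real.cos (((j:ℝ)+1) * (t-a)) + Real.cos (((j:ℝ)+1) * (t+a))
          = 2 * Real.cos (((j:ℝ)+1) * t) * Real.cos (((j:ℝ)+1) * a) := by
        rw [mul_sub, mul_add, Real.cos_sub, Real.cos_add]; ring
      linear_combination Real.cos (((j:ℝ)+1) * cheb n k) * h2
    simp only [Q]
    linear_combination hsum / (n:ℝ)
  rw [intervalIntegral.integral_congr (fun t _ => heq t)]
  have hint : ∀ j ∈ Finset.range (n-1), IntervalIntegrable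
      (fun t => (2 * Real.cos (((j:ℝ)+1) * cheb n k) * Real.cos (((j:ℝ)+1) * a)) *
        Real.cos (((j:ℝ)+1) * t)) volume 0 π :=
    fun j _ => (Continuous.intervalIntegrable (by fun_prop) _ _)
  rw [intervalIntegral.integral_add intervalIntegrable_const
      ((Continuous.intervalIntegrable (by fun_prop) _ _)),
    intervalIntegral.integral_const_mul]
  rw [intervalIntegral.integral_finset_sum hint]
  have hz : ∀ j ∈ Finset.range (n-1), (∫ t in (0:ℝ)..π,
      (2 * Real.cos (((j:ℝ)+1) * cheb n k) * Real.cos (((j:ℝ)+1) * a)) *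
        Real.cos (((j:ℝ)+1) * t)) = 0 := by
    intro j _
    rw [intervalIntegral.integral_const_mul, int_cos, mul_zero]
  rw [Finset.sum_congr rfl hz]
  simp [div_eq_mul_inv, mul_comm]

/-- For every `n ≥ 1` and `1 ≤ k ≤ n`, `∫₀^π S_{k,n}(t) dt = π/n`. -/
theorem integral_S (n k : ℕ) (hn : 1 ≤ n) (hk1 : 1 ≤ k) (hkn : k ≤ n) :
    ∫ t in (0:ℝ)..π, S n k t = π / n := by
  have hae : ∀ᵐ t : ℝ, t ∈ Set.uIoc (0:ℝ) π →
      S n k t = (Q n k (t - π / (2 * (n:ℝ))) + Q n k (t + π / (2 * (n:ℝ)))) / 2 := by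
    filter_upwards [ae_ne (cheb n k) (-(π / (2 * (n:ℝ)))), ae_ne (cheb n k) (π / (2 * (n:ℝ)))]
      with t h1 h2 _
    rw [S, P_eq_Q n k hn (t - π / (2 * (n:ℝ))) (by rw [sub_eq_add_neg]; exact h1),
        P_eq_Q n k hn (t + π / (2 * (n:ℝ))) h2]
  rw [intervalIntegral.integral_congr_ae hae]
  exact integral_Q_pair n k hn _
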